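/- For any patient i and any epoch t with 1 < t ≤ T, the difference in expected total risk reduction satisfies a_{i,t-1} - a_{i,t} = r · y_{i,t-1} · (CVD_i - a_{i,t}), where a_{i,t} = CVD_i - q · Σ_{τ=0}^{T-t+1} P_{i,t,τ} · (1-r)^τ · CVD_i. -/

import Mathlib

/-- Probability of exactly `τ` non-adherent epochs among epochs `t, …, T`. -/
noncomputable def nonAdhereProb (T : ℕ) (y : ℕ → ℝ) (t τ : ℕ) : ℝ :=
  ∑ A ∈ (Finset.Icc t T).powersetCard τ,
    (∏ s ∈ A, y s) * ∏ s ∈ (Finset.Icc t T) \ A, (1 - y s)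

/-- Expected total risk reduction if the patient is intervened at epoch `t`:
`a t = CVD - q · Σ_{τ=0}^{T-t+1} P_{t,τ} (1-r)^τ CVD`. -/
noncomputable def riskRed (T : ℕ) (y : ℕ → ℝ) (CVD q r : ℝ) (t : ℕ) : ℝ :=
  CVD - q * ∑ τ ∈ Finset.range (T - t + 2), nonAdhereProb T y t τ * (1 - r) ^ τ * CVD

/-!
The generating function `Σ_τ P_{t,τ} x^τ` of the number of non-adherent epochs factors as
`∏_{s=t}^{T} (x y_s + 1 - y_s)`. At `x = 1 - r` this gives `a_t = CVD - q CVD ∏_{s=t}^{T} (1 - r y_s)`,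
and passing from `t` to `t - 1` multiplies the product by `1 - r y_{t-1}`.
-/

open Finset

theorem Finset.sum_range_sum_powersetCard_mul_pow {ι R : Type*} [DecidableEq ι] [CommSemiring R]
    (s : Finset ι) (f g : ι → R) (x : R) {n : ℕ} (hn : #s < n) :
    ∑ k ∈ range n, (∑ A ∈ s.powersetCard k, (∏ i ∈ A, f i) * ∏ i ∈ s \ A, g i) * x ^ k =
      ∏ i ∈ s, (x * f i + g i) := by
  have hext : range (#s + 1) ⊆ range n := range_subset_range.mpr hn
  rw [prod_add, sum_powerset, ← sum_subset hext fun k _ hk => ?_]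
  · refine sum_congr rfl fun k _ => ?_
    rw [sum_mul]
    refine sum_congr rfl fun A hA => ?_
    rw [prod_mul_distrib, prod_const, (mem_powersetCard.mp hA).2]
    ring
  · rw [powersetCard_eq_empty.mpr (by simpa using hk), sum_empty, zero_mul]

theorem sum_nonAdhereProb_mul_pow (T : ℕ) (y : ℕ → ℝ) (t : ℕ) (x : ℝ) :
    ∑ τ ∈ range (T - t + 2), nonAdhereProb T y t τ * x ^ τ =
      ∏ s ∈ Icc t T, (x * y s + (1 - y s)) :=
  sum_range_sum_powersetCard_mul_pow (Icc t T) y (fun s => 1 - y s) x (by rw [Nat.card_Icc]; omega)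

theorem riskRed_eq_prod (T : ℕ) (y : ℕ → ℝ) (CVD q r : ℝ) (t : ℕ) :
    riskRed T y CVD q r t = CVD - q * CVD * ∏ s ∈ Icc t T, (1 - r * y s) := by
  have hfactor : ∀ s, (1 - r) * y s + (1 - y s) = 1 - r * y s := fun s => by ring
  rw [riskRed, ← sum_mul, sum_nonAdhereProb_mul_pow]
  simp only [hfactor]
  ring

theorem stmt3_general (T : ℕ) (y : ℕ → ℝ)
    (CVD q r : ℝ)
    (t : ℕ) (ht1 : 1 < t) (htT : t ≤ T) :
    riskRed T y CVD q r (t - 1) - riskRed T y CVD q r t =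
      r * y (t - 1) * (CVD - riskRed T y CVD q r t) := by
  obtain ⟨u, rfl⟩ : ∃ u, t = u + 1 := ⟨t - 1, by omega⟩
  rw [Nat.add_sub_cancel, riskRed_eq_prod, riskRed_eq_prod,
    ← insert_Icc_add_one_left_eq_Icc (by omega : u ≤ T), prod_insert (by simp)]
  ring

theorem stmt3 (T : ℕ) (y : ℕ → ℝ) (hy : ∀ s, 0 ≤ y s ∧ y s ≤ 1)
    (CVD q r : ℝ) (hCVD : 0 ≤ CVD) (hq : 0 ≤ q ∧ q ≤ 1) (hr : 0 ≤ r ∧ r ≤ 1)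
    (t : ℕ) (ht1 : 1 < t) (htT : t ≤ T) :
    riskRed T y CVD q r (t - 1) - riskRed T y CVD q r t =
      r * y (t - 1) * (CVD - riskRed T y CVD q r t) :=
  stmt3_general T y CVD q r t ht1 htT
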